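/- Fix an integer κ ≥ 1 and an integer n ≥ 1, and set h = 1/n and η(t) = ⌊nt⌋/n. Let š : {(t,s) : 0 ≤ s < t ≤ 1} → [0,1] be a measurable map such that for all s < t: the numbers t − š(t,s) and t − s lie in the same grid interval [ℓh, (ℓ+1)h) for some integer ℓ ≥ 0 (in particular |š(t,s) − s| ≤ h and š(t,s) < t), and š(t,s) = s whenever t − s ≤ κh. Define čK(t,s) = (t − š(t,s))^{H−1/2} for s < t and čK(t,s) = 0 for s ≥ t. Then there exists a constant C > 0, depending only on H and κ, such that ∫₀¹ ∫₀^{η(t)} | K(η(t),s) − čK(η(t),s) | ds dt ≤ C n^{−H−1/2}. -/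

import Mathlib

open MeasureTheory intervalIntegral

/-- Grid projection `η(t) = ⌊nt⌋/n`. -/
noncomputable def gridEta (n : ℕ) (t : ℝ) : ℝ := (⌊(n : ℝ) * t⌋ : ℝ) / n

/-- The fractional kernel `K(t,s) = (t-s)^(H-1/2)` for `s < t`, and `0` otherwise. -/
noncomputable def fracK (H t s : ℝ) : ℝ := if s < t then (t - s) ^ (H - 1/2) else 0

/-- The abstract hybrid-scheme kernel `čK(t,s) = (t - š(t,s))^(H-1/2)` for `s < t`,
and `0` for `s ≥ t`, built from a shift map `š`. -/
noncomputable def checkK (H : ℝ) (sh : ℝ → ℝ → ℝ) (t s : ℝ) : ℝ :=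
  if s < t then (t - sh t s) ^ (H - 1/2) else 0

lemma rpow_abs_sub_le {α a b x y : ℝ} (hα : α < 0) (ha : 0 < a)
    (hx : x ∈ Set.Icc a b) (hy : y ∈ Set.Icc a b) :
    |x ^ α - y ^ α| ≤ (-α) * a ^ (α - 1) * (b - a) := by
  have key := Convex.norm_image_sub_le_of_norm_hasDerivWithin_le
    (f := fun z : ℝ => z ^ α) (f' := fun z : ℝ => α * z ^ (α - 1))
    (s := Set.Icc a b) (C := (-α) * a ^ (α - 1))
    (fun z hz => (Real.hasDerivAt_rpow_const
      (Or.inl (ne_of_gt (lt_of_lt_of_le ha hz.1)))).hasDerivWithinAt)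
    (fun z hz => by
      have hz0 : (0:ℝ) < z := lt_of_lt_of_le ha hz.1
      have h1 : z ^ (α - 1) ≤ a ^ (α - 1) :=
        Real.rpow_le_rpow_of_nonpos ha hz.1 (by linarith)
      have h2 : (0:ℝ) ≤ z ^ (α - 1) := Real.rpow_nonneg hz0.le _
      rw [Real.norm_eq_abs, abs_mul, abs_of_neg hα, abs_of_nonneg h2]
      exact mul_le_mul_of_nonneg_left h1 (by linarith))
    (convex_Icc a b) hy hx
  have hxy : ‖x - y‖ ≤ b - a := by
    rw [Real.norm_eq_abs, abs_sub_le_iff]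
    constructor <;> [linarith [hx.2, hy.1]; linarith [hy.2, hx.1]]
  calc |x ^ α - y ^ α| ≤ (-α) * a ^ (α - 1) * ‖x - y‖ := key
    _ ≤ (-α) * a ^ (α - 1) * (b - a) := by
        apply mul_le_mul_of_nonneg_left hxy
        have := Real.rpow_nonneg ha.le (α - 1)
        nlinarith

lemma inner_bound (H : ℝ) (hH0 : 0 < H) (hH1 : H < 1/2)
    (κ n : ℕ) (hκ : 1 ≤ κ) (hn : 1 ≤ n) (sh : ℝ → ℝ → ℝ)
    (hsh : ∀ s t : ℝ, 0 ≤ s → s < t → t ≤ 1 →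
        sh t s ∈ Set.Icc (0 : ℝ) 1 ∧
        (∃ ℓ : ℕ, t - sh t s ∈ Set.Ico ((ℓ : ℝ) / n) (((ℓ : ℝ) + 1) / n) ∧
          t - s ∈ Set.Ico ((ℓ : ℝ) / n) (((ℓ : ℝ) + 1) / n)) ∧
        (t - s ≤ (κ : ℝ) / n → sh t s = s))
    (η : ℝ) (hη0 : 0 ≤ η) (hη1 : η ≤ 1) :
    (∫ s in (0:ℝ)..η, |fracK H η s - checkK H sh η s|)
      ≤ 4 * (n : ℝ) ^ (-H - 1/2) := by
  have hn0 : (0:ℝ) < n := by exact_mod_cast hn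
  have hκ0 : (0:ℝ) < κ := by exact_mod_cast hκ
  have hKn : (0:ℝ) < (κ:ℝ)/n := div_pos hκ0 hn0
  have hB0 : (0:ℝ) ≤ 4 * (n : ℝ) ^ (-H - 1/2) := by positivity
  set G : ℝ → ℝ := fun s => |fracK H η s - checkK H sh η s| with hG
  -- G vanishes near the diagonal
  have hGzero : ∀ s, 0 ≤ s → η - s ≤ (κ:ℝ)/n → G s = 0 := by
    intro s hs0 hnear
    by_cases hsη : s < η
    · have h := hsh s η hs0 hsη hη1
      have : sh η s = s := h.2.2 hnear
      simp [hG, fracK, checkK, hsη, this]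
    · simp [hG, fracK, checkK, hsη]
  by_cases hcase : η ≤ (κ:ℝ)/n
  · -- all of [0, η] is near the diagonal
    have : (∫ s in (0:ℝ)..η, G s) = ∫ s in (0:ℝ)..η, (0:ℝ) := by
      apply intervalIntegral.integral_congr
      intro s hs
      rw [Set.uIcc_of_le hη0] at hs
      exact hGzero s hs.1 (by linarith [hs.1])
    rw [this]; simpa using hB0
  · push_neg at hcase
    set m : ℝ := η - (κ:ℝ)/n with hm
    have hm0 : 0 < m := by simp [hm]; linarith
    have hmη : m < η := by simp [hm]; linarith
    by_cases hGint : IntervalIntegrable G volume 0 η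
    · have h1 : IntervalIntegrable G volume 0 m :=
        hGint.mono_set (by
          rw [Set.uIcc_of_le hm0.le, Set.uIcc_of_le hη0]
          exact Set.Icc_subset_Icc le_rfl hmη.le)
      have h2 : IntervalIntegrable G volume m η :=
        hGint.mono_set (by
          rw [Set.uIcc_of_le hmη.le, Set.uIcc_of_le hη0]
          exact Set.Icc_subset_Icc hm0.le le_rfl)
      have hsplit : (∫ s in (0:ℝ)..η, G s)
          = (∫ s in (0:ℝ)..m, G s) + ∫ s in m..η, G s :=
        (intervalIntegral.integral_add_adjacent_intervals h1 h2).symm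
      have hz2 : (∫ s in m..η, G s) = 0 := by
        have : (∫ s in m..η, G s) = ∫ s in m..η, (0:ℝ) := by
          apply intervalIntegral.integral_congr
          intro s hs
          rw [Set.uIcc_of_le hmη.le] at hs
          exact hGzero s (le_trans hm0.le hs.1) (by simp [hm] at hs ⊢; linarith [hs.1])
        rw [this]; simp
      -- the comparison function
      set c : ℝ := (1/2 - H) * 2 ^ ((3:ℝ)/2 - H) / n with hc
      have hc0 : 0 < c := by
        apply div_pos _ hn0
        exact mul_pos (by linarith) (Real.rpow_pos_of_pos two_pos _)
      set g : ℝ → ℝ := fun s => c * (η - s) ^ (H - 3/2) with hgdef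
      have hgcont : IntervalIntegrable g volume 0 m := by
        apply ContinuousOn.intervalIntegrable
        apply ContinuousOn.mul continuousOn_const
        apply ContinuousOn.rpow_const
        · exact (continuous_const.sub continuous_id).continuousOn
        · intro x hx
          rw [Set.uIcc_of_le hm0.le] at hx
          left
          have : (κ:ℝ)/n ≤ η - x := by simp [hm] at hx ⊢; linarith [hx.2]
          linarith
      have hpt : ∀ s ∈ Set.Icc (0:ℝ) m, G s ≤ g s := by
        intro s hs
        have hsη : s < η := lt_of_le_of_lt hs.2 hmη
        have hηs0 : 0 < η - s := by linarith
        by_cases hnear : η - s ≤ (κ:ℝ)/n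
        · rw [hGzero s hs.1 hnear]
          exact mul_nonneg hc0.le (Real.rpow_nonneg hηs0.le _)
        · push_neg at hnear
          obtain ⟨hmem, ⟨ℓ, hy, hx⟩, _⟩ := hsh s η hs.1 hsη hη1
          -- ℓ ≥ κ ≥ 1
          have hℓκ : (κ:ℝ) ≤ (ℓ:ℝ) := by
            have := hx.2
            have hlt : (κ:ℝ)/n < ((ℓ:ℝ)+1)/n := lt_trans hnear this
            have : (κ:ℝ) < (ℓ:ℝ) + 1 := by
              have := (div_lt_div_iff_of_pos_right hn0).mp hlt
              linarith
            exact_mod_cast Nat.lt_add_one_iff.mp (by exact_mod_cast this)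
          have hℓ1 : (1:ℝ) ≤ (ℓ:ℝ) := le_trans (by exact_mod_cast hκ) hℓκ
          have ha0 : (0:ℝ) < (ℓ:ℝ)/n := div_pos (by linarith) hn0
          have hGval : G s = |(η - s) ^ (H - 1/2) - (η - sh η s) ^ (H - 1/2)| := by
            simp [hG, fracK, checkK, hsη]
          have hxm : η - s ∈ Set.Icc ((ℓ:ℝ)/n) (((ℓ:ℝ)+1)/n) := ⟨hx.1, hx.2.le⟩
          have hym : η - sh η s ∈ Set.Icc ((ℓ:ℝ)/n) (((ℓ:ℝ)+1)/n) := ⟨hy.1, hy.2.le⟩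
          have hmvt := rpow_abs_sub_le (α := H - 1/2) (by linarith) ha0 hxm hym
          have hba : ((ℓ:ℝ)+1)/n - (ℓ:ℝ)/n = 1/n := by field_simp; ring
          rw [hGval]
          have hanti : ((ℓ:ℝ)/n) ^ (H - 1/2 - 1) ≤ ((η - s)/2) ^ (H - 1/2 - 1) := by
            apply Real.rpow_le_rpow_of_nonpos (by linarith) _ (by linarith)
            -- (η-s)/2 ≤ ℓ/n
            have h2ℓ : ((ℓ:ℝ)+1)/n ≤ 2*((ℓ:ℝ)/n) := by
              rw [div_le_iff₀ hn0]
              have : (ℓ:ℝ)+1 ≤ 2*(ℓ:ℝ) := by linarith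
              calc (ℓ:ℝ)+1 ≤ 2*(ℓ:ℝ) := this
                _ = 2*((ℓ:ℝ)/n) * n := by field_simp
            linarith [hx.2]
          have hhalf : ((η - s)/2) ^ (H - 1/2 - 1)
              = 2 ^ ((3:ℝ)/2 - H) * (η - s) ^ (H - 3/2) := by
            rw [Real.div_rpow hηs0.le (by norm_num)]
            rw [div_eq_mul_inv, ← Real.rpow_neg (by norm_num)]
            have : -(H - 1/2 - 1) = (3:ℝ)/2 - H := by ring
            rw [this]
            have : H - 1/2 - 1 = H - 3/2 := by ring
            rw [this]; ring
          calc |(η - s) ^ (H - 1/2) - (η - sh η s) ^ (H - 1/2)|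
              ≤ (-(H - 1/2)) * ((ℓ:ℝ)/n) ^ (H - 1/2 - 1) * (((ℓ:ℝ)+1)/n - (ℓ:ℝ)/n) := hmvt
            _ = (1/2 - H) * ((ℓ:ℝ)/n) ^ (H - 1/2 - 1) * (1/n) := by rw [hba]; ring_nf
            _ ≤ (1/2 - H) * (((η - s)/2) ^ (H - 1/2 - 1)) * (1/n) := by
                apply mul_le_mul_of_nonneg_right _ (by positivity)
                exact mul_le_mul_of_nonneg_left hanti (by linarith)
            _ = g s := by rw [hhalf, hgdef, hc]; ring
      have hmono : (∫ s in (0:ℝ)..m, G s) ≤ ∫ s in (0:ℝ)..m, g s :=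
        intervalIntegral.integral_mono_on hm0.le h1 hgcont hpt
      -- compute ∫ g
      have hgval : (∫ s in (0:ℝ)..m, g s)
          = c * ((η ^ (H - 1/2) - ((κ:ℝ)/n) ^ (H - 1/2)) / (H - 1/2)) := by
        rw [hgdef]
        rw [intervalIntegral.integral_const_mul]
        congr 1
        have hsub : (∫ s in (0:ℝ)..m, (η - s) ^ (H - 3/2))
            = ∫ x in (η - m)..(η - 0), x ^ (H - 3/2) :=
          intervalIntegral.integral_comp_sub_left (fun x => x ^ (H - 3/2)) η
        rw [hsub]
        have hem : η - m = (κ:ℝ)/n := by simp [hm]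
        rw [hem, sub_zero]
        rw [integral_rpow (Or.inr ⟨by intro h; linarith, by
          rw [Set.uIcc_of_le (by linarith : (κ:ℝ)/n ≤ η)]
          intro h
          exact absurd h.1 (not_le.mpr hKn)⟩)]
        have e1 : H - 3/2 + 1 = H - 1/2 := by ring
        rw [e1]
      have hgbound : c * ((η ^ (H - 1/2) - ((κ:ℝ)/n) ^ (H - 1/2)) / (H - 1/2))
          ≤ 4 * (n : ℝ) ^ (-H - 1/2) := by
        have hd : (0:ℝ) < 1/2 - H := by linarith
        have hηα : (0:ℝ) ≤ η ^ (H - 1/2) := Real.rpow_nonneg (by linarith) _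
        have hKα : (0:ℝ) ≤ ((κ:ℝ)/n) ^ (H - 1/2) := Real.rpow_nonneg hKn.le _
        have step1 : (η ^ (H - 1/2) - ((κ:ℝ)/n) ^ (H - 1/2)) / (H - 1/2)
            ≤ ((κ:ℝ)/n) ^ (H - 1/2) / (1/2 - H) := by
          have hne : H - 1/2 ≠ 0 := by linarith
          have e : (η ^ (H - 1/2) - ((κ:ℝ)/n) ^ (H - 1/2)) / (H - 1/2)
              = (((κ:ℝ)/n) ^ (H - 1/2) - η ^ (H - 1/2)) / (1/2 - H) := by
            rw [div_eq_div_iff hne hd.ne']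
            ring
          rw [e]
          exact (div_le_div_iff_of_pos_right hd).mpr (by linarith)
        have step2 : c * (((κ:ℝ)/n) ^ (H - 1/2) / (1/2 - H))
            = 2 ^ ((3:ℝ)/2 - H) * ((κ:ℝ)/n) ^ (H - 1/2) / n := by
          rw [hc, div_mul_div_comm,
            div_eq_div_iff (mul_ne_zero hn0.ne' hd.ne') hn0.ne']
          ring
        have h4 : (2:ℝ) ^ ((3:ℝ)/2 - H) ≤ 4 := by
          have l1 : (2:ℝ) ^ ((3:ℝ)/2 - H) ≤ (2:ℝ) ^ (2:ℝ) :=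
            Real.rpow_le_rpow_of_exponent_le one_le_two (by linarith)
          have l2 : (2:ℝ) ^ (2:ℝ) = 4 := by
            rw [show (2:ℝ) = ((2:ℕ):ℝ) from by norm_num, Real.rpow_natCast]
            norm_num
          linarith
        have hκb : ((κ:ℝ)/n) ^ (H - 1/2) ≤ (n:ℝ) ^ ((1:ℝ)/2 - H) := by
          have h1n : (0:ℝ) < 1/(n:ℝ) := by positivity
          have hle : (1:ℝ)/n ≤ (κ:ℝ)/n :=
            (div_le_div_iff_of_pos_right hn0).mpr (by exact_mod_cast hκ)
          calc ((κ:ℝ)/n) ^ (H - 1/2) ≤ ((1:ℝ)/n) ^ (H - 1/2) :=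
                Real.rpow_le_rpow_of_nonpos h1n hle (by linarith)
            _ = (n:ℝ) ^ ((1:ℝ)/2 - H) := by
                rw [one_div, Real.inv_rpow hn0.le, ← Real.rpow_neg hn0.le]
                congr 1; ring
        have hnn : (n:ℝ) ^ ((1:ℝ)/2 - H) / n = (n:ℝ) ^ (-H - 1/2) := by
          rw [div_eq_mul_inv, ← Real.rpow_neg_one (n:ℝ), ← Real.rpow_add hn0]
          congr 1; ring
        calc c * ((η ^ (H - 1/2) - ((κ:ℝ)/n) ^ (H - 1/2)) / (H - 1/2))
            ≤ c * (((κ:ℝ)/n) ^ (H - 1/2) / (1/2 - H)) :=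
              mul_le_mul_of_nonneg_left step1 hc0.le
          _ = 2 ^ ((3:ℝ)/2 - H) * ((κ:ℝ)/n) ^ (H - 1/2) / n := step2
          _ ≤ 4 * (n:ℝ) ^ ((1:ℝ)/2 - H) / n :=
              (div_le_div_iff_of_pos_right hn0).mpr
                (mul_le_mul h4 hκb hKα (by norm_num))
          _ = 4 * ((n:ℝ) ^ ((1:ℝ)/2 - H) / n) := by ring
          _ = 4 * (n:ℝ) ^ (-H - 1/2) := by rw [hnn]
      calc (∫ s in (0:ℝ)..η, G s) = (∫ s in (0:ℝ)..m, G s) + 0 := by rw [hsplit, hz2]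
        _ = ∫ s in (0:ℝ)..m, G s := by ring
        _ ≤ ∫ s in (0:ℝ)..m, g s := hmono
        _ = _ := hgval
        _ ≤ _ := hgbound
    · rw [intervalIntegral.integral_undef hGint]
      simpa using hB0

/-- under Assumption 3.1 on the shift map `š` (measurable, valued in `[0,1]`,
`t - š(t,s)` in the same grid interval `[ℓ/n, (ℓ+1)/n)` as `t - s`, and `š(t,s) = s` when
`t - s ≤ κ/n`), one has `∫₀¹ ∫₀^{η(t)} |K(η(t),s) - čK(η(t),s)| ds dt ≤ C n^(-H-1/2)`,
with `C` depending only on `H` and `κ`. -/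
theorem hybrid_kernel_L1_error_bound (H : ℝ) (hH0 : 0 < H) (hH1 : H < 1/2)
    (κ : ℕ) (hκ : 1 ≤ κ) :
    ∃ C > 0, ∀ n : ℕ, 1 ≤ n → ∀ sh : ℝ → ℝ → ℝ,
      Measurable (fun p : ℝ × ℝ => sh p.1 p.2) →
      (∀ s t : ℝ, 0 ≤ s → s < t → t ≤ 1 →
        sh t s ∈ Set.Icc (0 : ℝ) 1 ∧
        (∃ ℓ : ℕ, t - sh t s ∈ Set.Ico ((ℓ : ℝ) / n) (((ℓ : ℝ) + 1) / n) ∧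
          t - s ∈ Set.Ico ((ℓ : ℝ) / n) (((ℓ : ℝ) + 1) / n)) ∧
        (t - s ≤ (κ : ℝ) / n → sh t s = s)) →
      (∫ t in (0 : ℝ)..1, ∫ s in (0 : ℝ)..(gridEta n t),
          |fracK H (gridEta n t) s - checkK H sh (gridEta n t) s|)
        ≤ C * (n : ℝ) ^ (-H - 1/2) := by
  refine ⟨4, by norm_num, ?_⟩
  intro n hn sh _ hsh
  have hn0 : (0:ℝ) < n := by exact_mod_cast hn
  have hB0 : (0:ℝ) ≤ 4 * (n:ℝ) ^ (-H - 1/2) := by positivity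
  set I : ℝ → ℝ := fun t => ∫ s in (0:ℝ)..(gridEta n t),
      |fracK H (gridEta n t) s - checkK H sh (gridEta n t) s| with hI
  have hpt : ∀ t ∈ Set.Icc (0:ℝ) 1, I t ≤ 4 * (n:ℝ) ^ (-H - 1/2) := by
    intro t ht
    apply inner_bound H hH0 hH1 κ n hκ hn sh hsh
    · apply div_nonneg _ hn0.le
      exact_mod_cast Int.floor_nonneg.mpr (mul_nonneg hn0.le ht.1)
    · unfold gridEta
      rw [div_le_one hn0]
      have h1 : (⌊(n:ℝ)*t⌋ : ℝ) ≤ (n:ℝ)*t := Int.floor_le _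
      have h2 : (n:ℝ)*t ≤ (n:ℝ) := by
        calc (n:ℝ)*t ≤ (n:ℝ)*1 := mul_le_mul_of_nonneg_left ht.2 hn0.le
          _ = n := mul_one _
      linarith
  by_cases hint : IntervalIntegrable I volume 0 1
  · have key := intervalIntegral.integral_mono_on (by norm_num : (0:ℝ) ≤ 1)
      hint (_root_.intervalIntegrable_const (c := 4 * (n:ℝ) ^ (-H - 1/2))) hpt
    simpa using key
  · rw [show (∫ t in (0:ℝ)..1, I t) = 0 from intervalIntegral.integral_undef hint]
    linarith
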